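/- arXiv:2312.03945 — 7 statements merged into one kernel-verified Lean document; each statement's English description precedes it below -/
import Mathlib

section
/- Let u : ℝ≥0 → ℝ be an increasing function with u(0) = 0, and a > 0. Define ũ(x) := inf_{0 ≤ x' ≤ x} (u(x') + a(x − x')). If x is a point where ũ(x) < u(x) and ũ is differentiable at x, then ũ'(x) = a. -/
theorem stmt_4 (u : ℝ → ℝ) (hu : MonotoneOn u (Set.Ici 0)) (h0 : u 0 = 0)
    (a : ℝ) (ha : 0 < a) (v : ℝ → ℝ)
    (hv : ∀ x, v x = sInf ((fun x' => u x' + a * (x - x')) '' Set.Icc 0 x))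
    (x : ℝ) (hx : 0 ≤ x) (hlt : v x < u x)
    (hdiff : DifferentiableWithinAt ℝ v (Set.Ici 0) x) :
    derivWithin v (Set.Ici 0) x = a := by
  have hunat : ∀ t, 0 ≤ t → 0 ≤ u t := fun t ht => by
    have := hu (Set.mem_Ici.mpr le_rfl) (Set.mem_Ici.mpr ht) ht
    linarith
  have hbdd : ∀ y, 0 ≤ y → BddBelow ((fun x' => u x' + a * (y - x')) '' Set.Icc 0 y) := by
    intro y hy
    refine ⟨0, ?_⟩
    rintro _ ⟨t, ⟨ht0, hty⟩, rfl⟩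
    have := hunat t ht0
    dsimp only
    nlinarith
  have hne : ∀ y, 0 ≤ y → ((fun x' => u x' + a * (y - x')) '' Set.Icc 0 y).Nonempty :=
    fun y hy => ⟨_, ⟨0, ⟨le_rfl, hy⟩, rfl⟩⟩
  set δ := (u x - v x) / a with hδdef
  have hδ : 0 < δ := div_pos (by linarith) ha
  have haδ : a * δ = u x - v x := by
    rw [hδdef]; field_simp
  have key : ∀ y ∈ Set.Icc x (x + δ), v y = v x + a * (y - x) := by
    rintro y ⟨hyx, hyδ⟩
    have hy0 : 0 ≤ y := le_trans hx hyx
    rw [hv y]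
    apply le_antisymm
    · have h1 : sInf ((fun x' => u x' + a * (y - x')) '' Set.Icc 0 y) - a * (y - x) ≤ v x := by
        rw [hv x]
        apply le_csInf (hne x hx)
        rintro _ ⟨t, ⟨ht0, htx⟩, rfl⟩
        have hmem : u t + a * (y - t) ∈ ((fun x' => u x' + a * (y - x')) '' Set.Icc 0 y) :=
          ⟨t, ⟨ht0, le_trans htx hyx⟩, rfl⟩
        have := csInf_le (hbdd y hy0) hmem
        dsimp only
        linarith
      linarith
    · apply le_csInf (hne y hy0)
      rintro _ ⟨t, ⟨ht0, hty⟩, rfl⟩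
      rcases le_or_gt t x with htx | hxt
      · have hmem : u t + a * (x - t) ∈ ((fun x' => u x' + a * (x - x')) '' Set.Icc 0 x) :=
          ⟨t, ⟨ht0, htx⟩, rfl⟩
        have := csInf_le (hbdd x hx) hmem
        rw [hv x]
        dsimp only
        linarith
      · have huxt : u x ≤ u t := hu (Set.mem_Ici.mpr hx) (Set.mem_Ici.mpr ht0) hxt.le
        have htδ : t - x ≤ δ := by linarith
        have : a * (t - x) ≤ a * δ := by nlinarith
        dsimp only
        linarith
  have hIci : Set.Icc x (x + δ) ∈ nhdsWithin x (Set.Ici x) := by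
    rw [← Set.Ici_inter_Iic]
    exact Filter.inter_mem self_mem_nhdsWithin
      (mem_nhdsWithin_of_mem_nhds (Iic_mem_nhds (by linarith)))
  have hw : HasDerivWithinAt (fun y => v x + a * (y - x)) a (Set.Ici x) x := by
    have h : HasDerivAt (fun y => v x + a * (y - x)) a x := by
      simpa using (((hasDerivAt_id x).sub_const x).const_mul a).const_add (v x)
    exact h.hasDerivWithinAt
  have hva : HasDerivWithinAt v a (Set.Ici x) x := by
    apply hw.congr_of_eventuallyEq
    · filter_upwards [hIci] with y hy using key y hy
    · simpa using key x ⟨le_rfl, by linarith⟩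
  have hvd : HasDerivWithinAt v (derivWithin v (Set.Ici 0) x) (Set.Ici x) x :=
    (hdiff.hasDerivWithinAt).mono (Set.Ici_subset_Ici.mpr hx)
  have hu1 := hvd.derivWithin (uniqueDiffOn_Ici x x Set.self_mem_Ici)
  have hu2 := hva.derivWithin (uniqueDiffOn_Ici x x Set.self_mem_Ici)
  rw [← hu1, hu2]
end

section
/- For every increasing function u on ℝ≥0 with u(0) = 0 and every a > 0, there exists a continuous increasing function ũ on ℝ≥0 such that 0 ≤ ũ ≤ u everywhere and ũ'(x) = a at every point x where ũ ≠ u and ũ is differentiable. -/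
open Set

theorem stmt_5 (u : ℝ → ℝ) (hu : MonotoneOn u (Set.Ici 0)) (h0 : u 0 = 0)
    (a : ℝ) (ha : 0 < a) :
    ∃ v : ℝ → ℝ, ContinuousOn v (Set.Ici 0) ∧ MonotoneOn v (Set.Ici 0) ∧
      (∀ x, 0 ≤ x → 0 ≤ v x ∧ v x ≤ u x) ∧
      (∀ x, 0 ≤ x → v x ≠ u x → DifferentiableWithinAt ℝ v (Set.Ici 0) x →
        derivWithin v (Set.Ici 0) x = a) := by
  set v : ℝ → ℝ := fun x => sInf ((fun t => u t + a * (x - t)) '' Icc 0 x) with hvdef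
  have hu0 : ∀ t, 0 ≤ t → 0 ≤ u t := fun t ht => by
    have := hu (self_mem_Ici) ht ht
    linarith [h0]
  have hbdd : ∀ x : ℝ, 0 ≤ x → BddBelow ((fun t => u t + a * (x - t)) '' Icc 0 x) := by
    intro x hx
    refine ⟨0, ?_⟩
    rintro y ⟨t, ht, rfl⟩
    have h1 := hu0 t ht.1
    have h2 : 0 ≤ a * (x - t) := mul_nonneg ha.le (by linarith [ht.2])
    show 0 ≤ u t + a * (x - t)
    linarith
  have hne : ∀ x : ℝ, 0 ≤ x → ((fun t => u t + a * (x - t)) '' Icc 0 x).Nonempty :=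
    fun x hx => ⟨_, mem_image_of_mem _ (right_mem_Icc.2 hx)⟩
  have h_le_elem : ∀ x, 0 ≤ x → ∀ t ∈ Icc 0 x, v x ≤ u t + a * (x - t) := by
    intro x hx t ht
    exact csInf_le (hbdd x hx) (mem_image_of_mem _ ht)
  have h_ge : ∀ x, 0 ≤ x → ∀ c, (∀ t ∈ Icc 0 x, c ≤ u t + a * (x - t)) → c ≤ v x := by
    intro x hx c hc
    refine le_csInf (hne x hx) ?_
    rintro y ⟨t, ht, rfl⟩
    exact hc t ht
  have hnonneg : ∀ x, 0 ≤ x → 0 ≤ v x := by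
    intro x hx
    refine h_ge x hx 0 fun t ht => ?_
    have h2 : 0 ≤ a * (x - t) := mul_nonneg ha.le (by linarith [ht.2])
    linarith [hu0 t ht.1]
  have hle : ∀ x, 0 ≤ x → v x ≤ u x := by
    intro x hx
    have := h_le_elem x hx x (right_mem_Icc.2 hx)
    simpa using this
  have hmono : ∀ x y, 0 ≤ x → x ≤ y → v x ≤ v y := by
    intro x y hx hxy
    refine h_ge y (hx.trans hxy) (v x) fun t ht => ?_
    rcases le_or_gt t x with h | h
    · have := h_le_elem x hx t ⟨ht.1, h⟩
      have : a * (x - t) ≤ a * (y - t) := mul_le_mul_of_nonneg_left (by linarith) ha.le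
      linarith [h_le_elem x hx t ⟨ht.1, h⟩]
    · have h1 : u x ≤ u t := hu hx ht.1 h.le
      have h2 : 0 ≤ a * (y - t) := mul_nonneg ha.le (by linarith [ht.2])
      linarith [hle x hx]
  have hlip : ∀ x y, 0 ≤ x → x ≤ y → v y ≤ v x + a * (y - x) := by
    intro x y hx hxy
    have : v y - a * (y - x) ≤ v x := by
      refine h_ge x hx _ fun t ht => ?_
      have := h_le_elem y (hx.trans hxy) t ⟨ht.1, ht.2.trans hxy⟩
      have hexp : u t + a * (x - t) + a * (y - x) = u t + a * (y - t) := by ring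
      linarith
    linarith
  have hloc : ∀ x, 0 ≤ x → v x < u x → ∀ y, x ≤ y → a * (y - x) ≤ u x - v x →
      v y = v x + a * (y - x) := by
    intro x hx hvx y hxy hsmall
    refine le_antisymm (hlip x y hx hxy) ?_
    refine h_ge y (hx.trans hxy) _ fun t ht => ?_
    rcases le_or_gt t x with h | h
    · have h1 := h_le_elem x hx t ⟨ht.1, h⟩
      have hexp : u t + a * (x - t) + a * (y - x) = u t + a * (y - t) := by ring
      linarith
    · have h1 : u x ≤ u t := hu hx ht.1 h.le
      have h2 : 0 ≤ a * (y - t) := mul_nonneg ha.le (by linarith [ht.2])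
      linarith
  refine ⟨v, ?_, fun x hx y hy hxy => hmono x y hx hxy,
    fun x hx => ⟨hnonneg x hx, hle x hx⟩, ?_⟩
  · -- continuity via Lipschitz
    have : LipschitzOnWith a.toNNReal v (Ici 0) := by
      refine LipschitzOnWith.of_dist_le_mul fun x hx y hy => ?_
      rw [Real.dist_eq, Real.dist_eq, Real.coe_toNNReal a ha.le]
      rcases le_total x y with h | h
      · have h1 := hmono x y hx h
        have h2 := hlip x y hx h
        rw [abs_of_nonpos (by linarith), abs_of_nonpos (by linarith)]
        linarith
      · have h1 := hmono y x hy h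
        have h2 := hlip y x hy h
        rw [abs_of_nonneg (by linarith), abs_of_nonneg (by linarith)]
        linarith
    exact this.continuousOn
  · intro x hx hneq hdiff
    have hvx : v x < u x := lt_of_le_of_ne (hle x hx) hneq
    have hδ : 0 < u x - v x := by linarith
    have heps : 0 < (u x - v x) / a := div_pos hδ ha
    have heq : ∀ y ∈ Icc x (x + (u x - v x) / a), v y = v x + a * (y - x) := by
      intro y hy
      refine hloc x hx hvx y hy.1 ?_
      have h1 : a * (y - x) ≤ a * ((u x - v x) / a) :=
        mul_le_mul_of_nonneg_left (by linarith [hy.2]) ha.le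
      rwa [mul_div_cancel₀ _ ha.ne'] at h1
    have hf : HasDerivWithinAt (fun y => v x + a * (y - x)) a (Ici x) x := by
      have h1 : HasDerivWithinAt (fun y : ℝ => y) 1 (Ici x) x := hasDerivWithinAt_id x _
      have h2 := ((h1.sub_const x).const_mul a).const_add (v x)
      simpa using h2
    have hmem : Icc x (x + (u x - v x) / a) ∈ nhdsWithin x (Ici x) := by
      rw [← Ici_inter_Iic]
      exact inter_mem_nhdsWithin _ (Iic_mem_nhds (by linarith))
    have hv_eq : v =ᶠ[nhdsWithin x (Ici x)] fun y => v x + a * (y - x) :=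
      Filter.eventuallyEq_of_mem hmem heq
    have hvd : HasDerivWithinAt v a (Ici x) x :=
      hf.congr_of_eventuallyEq hv_eq (by simp)
    have hvd' : HasDerivWithinAt v (derivWithin v (Ici 0) x) (Ici x) x :=
      hdiff.hasDerivWithinAt.mono (Ici_subset_Ici.2 hx)
    have h1 := hvd.derivWithin (uniqueDiffOn_Ici x x self_mem_Ici)
    have h2 := hvd'.derivWithin (uniqueDiffOn_Ici x x self_mem_Ici)
    rw [h2] at h1
    exact h1
end

section
/- With u ∈ U, a > 0, z ≥ 0 fixed and ũ_{z,p}(x,y) := inf { z + p(x−x') + (a/p)(y−y') : 0 ≤ x' ≤ x, 0 ≤ y' ≤ y, u(x',y') ≤ z }, the map p ↦ ũ_{z,p}(x,y) is continuous on (0,∞) for each fixed (x,y) ∈ ℝ≥0². -/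
open Set

/-- `u` belongs to the class `U`: doubly increasing on the nonnegative quadrant,
nonnegative there, and vanishing on the coordinate axes. -/
def MemU (u : ℝ × ℝ → ℝ) : Prop :=
  (∀ p q : ℝ × ℝ, 0 ≤ p.1 → 0 ≤ p.2 → p.1 ≤ q.1 → p.2 ≤ q.2 → u p ≤ u q) ∧
  (∀ p : ℝ × ℝ, 0 ≤ p.1 → 0 ≤ p.2 → 0 ≤ u p) ∧
  (∀ t : ℝ, 0 ≤ t → u (0, t) = 0 ∧ u (t, 0) = 0)

/-- The regularization `ũ_{z,p}(x,y)`. -/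
noncomputable def tzp (u : ℝ × ℝ → ℝ) (a z p x y : ℝ) : ℝ :=
  sInf ((fun q : ℝ × ℝ => z + p * (x - q.1) + (a / p) * (y - q.2)) ''
    {q : ℝ × ℝ | 0 ≤ q.1 ∧ q.1 ≤ x ∧ 0 ≤ q.2 ∧ q.2 ≤ y ∧ u q ≤ z})

/-- The regularization `ũ_z(x,y) = sup_{p>0} ũ_{z,p}(x,y)`. -/
noncomputable def tz (u : ℝ × ℝ → ℝ) (a z x y : ℝ) : ℝ :=
  sSup ((fun p => tzp u a z p x y) '' Ioi 0)

/-- The regularization `ũ(x,y) = inf_{z≥0} ũ_z(x,y)`. -/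
noncomputable def tu (u : ℝ × ℝ → ℝ) (a x y : ℝ) : ℝ :=
  sInf ((fun z => tz u a z x y) '' Ici 0)

theorem stmt_8 (u : ℝ × ℝ → ℝ) (hu : MemU u) (a : ℝ) (ha : 0 < a)
    (z : ℝ) (hz : 0 ≤ z) (x y : ℝ) (hx : 0 ≤ x) (hy : 0 ≤ y) :
    ContinuousOn (fun p => tzp u a z p x y) (Set.Ioi 0) := by
  set S : Set (ℝ × ℝ) := {q : ℝ × ℝ | 0 ≤ q.1 ∧ q.1 ≤ x ∧ 0 ≤ q.2 ∧ q.2 ≤ y ∧ u q ≤ z}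
    with hSdef
  have hS : S.Nonempty := by
    refine ⟨(0, 0), ⟨le_rfl, hx, le_rfl, hy, ?_⟩⟩
    have h0 := (hu.2.2 0 le_rfl).1
    exact h0.le.trans hz
  have hdef : ∀ p : ℝ, tzp u a z p x y =
      sInf ((fun q : ℝ × ℝ => z + p * (x - q.1) + (a / p) * (y - q.2)) '' S) := fun p => rfl
  have hbdd : ∀ p : ℝ, 0 < p →
      BddBelow ((fun q : ℝ × ℝ => z + p * (x - q.1) + (a / p) * (y - q.2)) '' S) := by
    intro p hp
    refine ⟨z, ?_⟩
    rintro b ⟨r, ⟨h1, h2, h3, h4, h5⟩, rfl⟩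
    have hap : 0 < a / p := div_pos ha hp
    nlinarith
  have key : ∀ p q : ℝ, 0 < p → 0 < q →
      tzp u a z p x y ≤ tzp u a z q x y + (x * |p - q| + a * y * |p⁻¹ - q⁻¹|) := by
    intro p q hp hq
    rw [hdef, hdef, ← sub_le_iff_le_add]
    refine le_csInf (hS.image _) ?_
    rintro b ⟨r, hr, rfl⟩
    rw [sub_le_iff_le_add]
    refine le_trans (csInf_le (hbdd p hp) ⟨r, hr, rfl⟩) ?_
    obtain ⟨h1, h2, h3, h4, h5⟩ := hr
    have e1 : (p - q) * (x - r.1) ≤ |p - q| * x :=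
      le_trans (mul_le_mul_of_nonneg_right (le_abs_self _) (by linarith))
        (mul_le_mul_of_nonneg_left (by linarith) (abs_nonneg _))
    have e2 : (p⁻¹ - q⁻¹) * (y - r.2) ≤ |p⁻¹ - q⁻¹| * y :=
      le_trans (mul_le_mul_of_nonneg_right (le_abs_self _) (by linarith))
        (mul_le_mul_of_nonneg_left (by linarith) (abs_nonneg _))
    have e3 : a * ((p⁻¹ - q⁻¹) * (y - r.2)) ≤ a * (|p⁻¹ - q⁻¹| * y) :=
      mul_le_mul_of_nonneg_left e2 ha.le
    rw [div_eq_mul_inv, div_eq_mul_inv]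
    nlinarith
  intro p0 hp0
  have hp0' : (0:ℝ) < p0 := hp0
  have hc : ContinuousAt (fun p : ℝ => x * |p - p0| + a * y * |p⁻¹ - p0⁻¹|) p0 := by
    have hinv : ContinuousAt (fun p : ℝ => p⁻¹) p0 := continuousAt_inv₀ (ne_of_gt hp0')
    exact (continuousAt_const.mul ((continuousAt_id.sub continuousAt_const).abs)).add
      (continuousAt_const.mul ((hinv.sub continuousAt_const).abs))
  have hc0 : Filter.Tendsto (fun p : ℝ => x * |p - p0| + a * y * |p⁻¹ - p0⁻¹|)
      (nhdsWithin p0 (Ioi 0)) (nhds 0) := by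
    have := (hc.continuousWithinAt (s := Ioi 0))
    simpa [ContinuousWithinAt] using this
  have hdist : ∀ p ∈ Ioi (0:ℝ), dist (tzp u a z p x y) (tzp u a z p0 x y) ≤
      x * |p - p0| + a * y * |p⁻¹ - p0⁻¹| := by
    intro p hp
    rw [Real.dist_eq, abs_sub_le_iff]
    constructor
    · linarith [key p p0 hp hp0']
    · have := key p0 p hp0' hp
      rw [abs_sub_comm p0 p, abs_sub_comm p0⁻¹ p⁻¹] at this
      linarith
  have hsq : Filter.Tendsto (fun p => dist (tzp u a z p x y) (tzp u a z p0 x y))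
      (nhdsWithin p0 (Ioi 0)) (nhds 0) := by
    refine squeeze_zero' ?_ ?_ hc0
    · exact Filter.eventually_of_mem self_mem_nhdsWithin fun p _ => dist_nonneg
    · exact Filter.eventually_of_mem self_mem_nhdsWithin hdist
  exact tendsto_iff_dist_tendsto_zero.mpr hsq
end

section
/- With u ∈ U, a > 0, and ũ_{z,p} defined as ũ_{z,p}(x,y) := inf { z + p(x−x') + (a/p)(y−y') : 0 ≤ x' ≤ x, 0 ≤ y' ≤ y, u(x',y') ≤ z }, for each x, y, z ≥ 0 the supremum sup_{p>0} ũ_{z,p}(x,y) is attained at some p > 0. -/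
open Set

/-!
Each `p ↦ ũ_{z,p}(x,y)` is an infimum of functions continuous on `(0, ∞)`, hence upper
semicontinuous. Testing the infimum at the points `(0, y)` and `(x, 0)` of the feasible set gives
`z ≤ ũ_{z,p}(x,y) ≤ z + min (p x) (a y / p)`, so `ũ_{z,p}(x,y) → z` as `p → 0⁺` and as `p → ∞`,
while it is `≥ z` everywhere. An upper semicontinuous function on `(0, ∞)` with equal limits at both
ends that somewhere reaches that limit attains its supremum: either it never exceeds the limit, or
the superlevel set of a value above the limit is a compact subset of `(0, ∞)`.
-/

open Filter Topology

theorem exists_isMaxOn_Ioi_of_tendsto {g : ℝ → ℝ} {m : ℝ}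
    (hg : UpperSemicontinuousOn g (Ioi 0)) (h₀ : Tendsto g (𝓝[>] 0) (𝓝 m))
    (h_top : Tendsto g atTop (𝓝 m)) (hm : ∃ p > 0, m ≤ g p) :
    ∃ p > 0, IsMaxOn g (Ioi 0) p := by
  by_cases h_above : ∃ p₁ > 0, m < g p₁
  · obtain ⟨p₁, hp₁, hmp₁⟩ := h_above
    obtain ⟨δ, hδ, hδg⟩ :=
      mem_nhdsGT_iff_exists_Ioo_subset.1 (h₀.eventually (gt_mem_nhds hmp₁))
    obtain ⟨R, hR⟩ := eventually_atTop.1 (h_top.eventually (gt_mem_nhds hmp₁))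
    have h_out : ∀ q > 0, q ∉ Icc δ R → g q < g p₁ := by
      intro q hq hq'
      rcases not_and_or.1 hq' with h | h
      · exact hδg ⟨hq, not_le.1 h⟩
      · exact hR q (not_le.1 h).le
    have hp₁_mem : p₁ ∈ Icc δ R := by_contra fun h => lt_irrefl _ (h_out p₁ hp₁ h)
    have hsub : Icc δ R ⊆ Ioi 0 := fun p hp => hδ.trans_le hp.1
    obtain ⟨p, hp, hmax⟩ := (hg.mono hsub).exists_isMaxOn ⟨p₁, hp₁_mem⟩ isCompact_Icc
    refine ⟨p, hsub hp, fun q (hq : 0 < q) => ?_⟩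
    by_cases hq' : q ∈ Icc δ R
    · exact hmax hq'
    · exact (h_out q hq hq').le.trans (hmax hp₁_mem)
  · push Not at h_above
    obtain ⟨p, hp, hmp⟩ := hm
    exact ⟨p, hp, fun q hq => (h_above q hq).trans hmp⟩

def feasibleSet (u : ℝ × ℝ → ℝ) (x y z : ℝ) : Set (ℝ × ℝ) :=
  {q | 0 ≤ q.1 ∧ q.1 ≤ x ∧ 0 ≤ q.2 ∧ q.2 ≤ y ∧ u q ≤ z}

section

variable {u : ℝ × ℝ → ℝ} {a z p x y : ℝ}

theorem MemU.mk_zero_mem_feasibleSet (hu : MemU u) (hx : 0 ≤ x) (hy : 0 ≤ y) (hz : 0 ≤ z) :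
    (x, 0) ∈ feasibleSet u x y z :=
  ⟨hx, le_rfl, le_rfl, hy, ((hu.2.2 x hx).2).trans_le hz⟩

theorem MemU.zero_mk_mem_feasibleSet (hu : MemU u) (hx : 0 ≤ x) (hy : 0 ≤ y) (hz : 0 ≤ z) :
    (0, y) ∈ feasibleSet u x y z :=
  ⟨le_rfl, hx, hy, le_rfl, ((hu.2.2 y hy).1).trans_le hz⟩

theorem le_add_mul_add_div_mul (ha : 0 ≤ a) (hp : 0 < p) {q : ℝ × ℝ}
    (hq : q ∈ feasibleSet u x y z) : z ≤ z + p * (x - q.1) + a / p * (y - q.2) := by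
  have h₁ := mul_nonneg hp.le (sub_nonneg.2 hq.2.1)
  have h₂ := mul_nonneg (div_nonneg ha hp.le) (sub_nonneg.2 hq.2.2.2.1)
  linarith

theorem tzp_le_of_mem_feasibleSet (ha : 0 ≤ a) (hp : 0 < p) {q : ℝ × ℝ}
    (hq : q ∈ feasibleSet u x y z) : tzp u a z p x y ≤ z + p * (x - q.1) + a / p * (y - q.2) :=
  csInf_le ⟨z, forall_mem_image.2 fun _ hq' => le_add_mul_add_div_mul ha hp hq'⟩
    (mem_image_of_mem _ hq)

theorem le_tzp (ha : 0 ≤ a) (hp : 0 < p) (hne : (feasibleSet u x y z).Nonempty) :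
    z ≤ tzp u a z p x y :=
  le_csInf (hne.image _) (forall_mem_image.2 fun _ hq => le_add_mul_add_div_mul ha hp hq)

theorem MemU.tzp_le_add_mul (hu : MemU u) (ha : 0 ≤ a) (hp : 0 < p) (hx : 0 ≤ x) (hy : 0 ≤ y)
    (hz : 0 ≤ z) : tzp u a z p x y ≤ z + p * x := by
  simpa using tzp_le_of_mem_feasibleSet ha hp (hu.zero_mk_mem_feasibleSet hx hy hz)

theorem MemU.tzp_le_add_div_mul (hu : MemU u) (ha : 0 ≤ a) (hp : 0 < p) (hx : 0 ≤ x)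
    (hy : 0 ≤ y) (hz : 0 ≤ z) : tzp u a z p x y ≤ z + a / p * y := by
  simpa using tzp_le_of_mem_feasibleSet ha hp (hu.mk_zero_mem_feasibleSet hx hy hz)

theorem upperSemicontinuousOn_tzp (ha : 0 ≤ a) (hne : (feasibleSet u x y z).Nonempty) :
    UpperSemicontinuousOn (fun p => tzp u a z p x y) (Ioi 0) := by
  intro p (hp : 0 < p) c hc
  obtain ⟨_, ⟨q, hq, rfl⟩, hqc⟩ := exists_lt_of_csInf_lt (hne.image _) hc
  have hcont : ContinuousAt (fun p => z + p * (x - q.1) + a / p * (y - q.2)) p := by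
    fun_prop (disch := exact hp.ne')
  filter_upwards [self_mem_nhdsWithin,
    nhdsWithin_le_nhds (hcont.eventually (gt_mem_nhds hqc))] with p' (hp' : 0 < p') hlt
  exact (tzp_le_of_mem_feasibleSet ha hp' hq).trans_lt hlt

theorem MemU.tendsto_tzp_nhdsGT_zero (hu : MemU u) (ha : 0 ≤ a) (hx : 0 ≤ x) (hy : 0 ≤ y)
    (hz : 0 ≤ z) : Tendsto (fun p => tzp u a z p x y) (𝓝[>] 0) (𝓝 z) := by
  have hupper : Tendsto (fun p : ℝ => z + p * x) (𝓝[>] 0) (𝓝 z) :=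
    tendsto_nhdsWithin_of_tendsto_nhds <| by
      simpa using ((continuous_mul_const x).tendsto 0).const_add z
  refine tendsto_of_tendsto_of_tendsto_of_le_of_le' tendsto_const_nhds hupper ?_ ?_ <;>
    filter_upwards [self_mem_nhdsWithin] with p (hp : 0 < p)
  · exact le_tzp ha hp ⟨_, hu.zero_mk_mem_feasibleSet hx hy hz⟩
  · exact hu.tzp_le_add_mul ha hp hx hy hz

theorem MemU.tendsto_tzp_atTop (hu : MemU u) (ha : 0 ≤ a) (hx : 0 ≤ x) (hy : 0 ≤ y)
    (hz : 0 ≤ z) : Tendsto (fun p => tzp u a z p x y) atTop (𝓝 z) := by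
  have hupper : Tendsto (fun p : ℝ => z + a / p * y) atTop (𝓝 z) := by
    simpa using ((tendsto_const_nhds.div_atTop tendsto_id).mul_const y).const_add z
  refine tendsto_of_tendsto_of_tendsto_of_le_of_le' tendsto_const_nhds hupper ?_ ?_ <;>
    filter_upwards [eventually_gt_atTop 0] with p hp
  · exact le_tzp ha hp ⟨_, hu.zero_mk_mem_feasibleSet hx hy hz⟩
  · exact hu.tzp_le_add_div_mul ha hp hx hy hz

end

theorem stmt_9 (u : ℝ × ℝ → ℝ) (hu : MemU u) (a : ℝ) (ha : 0 < a)
    (x y z : ℝ) (hx : 0 ≤ x) (hy : 0 ≤ y) (hz : 0 ≤ z) :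
    ∃ p > (0:ℝ), tz u a z x y = tzp u a z p x y := by
  have hne : (feasibleSet u x y z).Nonempty := ⟨_, hu.zero_mk_mem_feasibleSet hx hy hz⟩
  obtain ⟨p, hp, hmax⟩ := exists_isMaxOn_Ioi_of_tendsto (upperSemicontinuousOn_tzp ha.le hne)
    (hu.tendsto_tzp_nhdsGT_zero ha.le hx hy hz) (hu.tendsto_tzp_atTop ha.le hx hy hz)
    ⟨1, one_pos, le_tzp ha.le one_pos hne⟩
  exact ⟨p, hp, IsGreatest.csSup_eq ⟨mem_image_of_mem _ hp, forall_mem_image.2 hmax⟩⟩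
end

section
/- Let u ∈ U, a > 0, x, y, z ≥ 0 with u(x,y) > z, and define ũ_z(x,y) := sup_{p>0} inf { z + p(x−x') + (a/p)(y−y') : 0 ≤ x' ≤ x, 0 ≤ y' ≤ y, u(x',y') ≤ z }. Then for any Δx, Δy > 0, ũ_z(x+Δx, y+Δy) − ũ_z(x,y) ≥ √(a Δx Δy). -/
open Set

set_option maxHeartbeats 2000000 in
theorem stmt_12 (u : ℝ × ℝ → ℝ) (hu : MemU u) (a : ℝ) (ha : 0 < a)
    (x y z : ℝ) (hx : 0 ≤ x) (hy : 0 ≤ y) (hz : 0 ≤ z) (huz : z < u (x, y))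
    (dx dy : ℝ) (hdx : 0 < dx) (hdy : 0 < dy) :
    Real.sqrt (a * dx * dy) ≤ tz u a z (x + dx) (y + dy) - tz u a z x y := by
  obtain ⟨hmono, hpos, haxes⟩ := hu
  obtain ⟨s, hs⟩ : ∃ s : ℝ, s = Real.sqrt (a * dx * dy) := ⟨_, rfl⟩
  rw [← hs]
  have hs0 : 0 ≤ s := hs ▸ Real.sqrt_nonneg _
  have hssq : s ^ 2 = a * dx * dy := by rw [hs]; exact Real.sq_sqrt (by positivity)
  -- lower bound z for the defining set of tzp at any point
  have hbdd : ∀ (X Y p : ℝ), 0 < p →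
      z ∈ lowerBounds ((fun q : ℝ × ℝ => z + p * (X - q.1) + (a / p) * (Y - q.2)) ''
        {q : ℝ × ℝ | 0 ≤ q.1 ∧ q.1 ≤ X ∧ 0 ≤ q.2 ∧ q.2 ≤ Y ∧ u q ≤ z}) := by
    rintro X Y p hp _ ⟨q, ⟨h1, h2, h3, h4, h5⟩, rfl⟩
    have h6 : 0 < a / p := div_pos ha hp
    have h7 : 0 ≤ p * (X - q.1) := mul_nonneg hp.le (by linarith)
    have h8 : 0 ≤ (a / p) * (Y - q.2) := mul_nonneg h6.le (by linarith)
    simp only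
    linarith
  have htzp_le : ∀ (X Y p : ℝ), 0 < p → ∀ q : ℝ × ℝ,
      0 ≤ q.1 → q.1 ≤ X → 0 ≤ q.2 → q.2 ≤ Y → u q ≤ z →
      tzp u a z p X Y ≤ z + p * (X - q.1) + (a / p) * (Y - q.2) := by
    intro X Y p hp q h1 h2 h3 h4 h5
    exact csInf_le ⟨z, hbdd X Y p hp⟩ ⟨q, ⟨h1, h2, h3, h4, h5⟩, rfl⟩
  have hzero1 : ∀ Y : ℝ, 0 ≤ Y → u (0, Y) ≤ z := fun Y hY => (haxes Y hY).1.le.trans hz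
  have hzero2 : ∀ X : ℝ, 0 ≤ X → u (X, 0) ≤ z := fun X hX => (haxes X hX).2.le.trans hz
  have hz_le_tzp : ∀ p : ℝ, 0 < p → z ≤ tzp u a z p x y := by
    intro p hp
    apply le_csInf
    · exact ⟨_, ⟨(0, y), ⟨le_refl 0, hx, hy, le_refl y, hzero1 y hy⟩, rfl⟩⟩
    · exact fun b hb => hbdd x y p hp hb
  have hXpos : (0:ℝ) < x + dx := by linarith
  have hYpos : (0:ℝ) < y + dy := by linarith
  -- bounded above for tzp at the new point
  have hbddAbove : BddAbove ((fun p => tzp u a z p (x + dx) (y + dy)) '' Ioi 0) := by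
    refine ⟨z + Real.sqrt (a * (x + dx) * (y + dy)), ?_⟩
    rintro _ ⟨P', hP', rfl⟩
    simp only [mem_Ioi] at hP'
    rcases le_total (P' * (x + dx)) ((a / P') * (y + dy)) with hc | hc
    · have h1 := htzp_le (x + dx) (y + dy) P' hP' (0, y + dy)
        le_rfl hXpos.le hYpos.le le_rfl (hzero1 _ hYpos.le)
      have h1' : tzp u a z P' (x + dx) (y + dy) ≤ z + P' * (x + dx) := by
        simpa using h1
      have h2 : P' * (x + dx) ≤ Real.sqrt (a * (x + dx) * (y + dy)) := by
        rw [Real.le_sqrt (by positivity) (by positivity)]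
        have h3 := mul_le_mul_of_nonneg_left hc (by positivity : (0:ℝ) ≤ P' * (x + dx))
        have hid : P' * (x + dx) * ((a / P') * (y + dy)) = a * (x + dx) * (y + dy) := by
          field_simp
        nlinarith
      linarith
    · have h1 := htzp_le (x + dx) (y + dy) P' hP' (x + dx, 0)
        hXpos.le le_rfl le_rfl hYpos.le (hzero2 _ hXpos.le)
      have h1' : tzp u a z P' (x + dx) (y + dy) ≤ z + (a / P') * (y + dy) := by
        simpa using h1
      have h2 : (a / P') * (y + dy) ≤ Real.sqrt (a * (x + dx) * (y + dy)) := by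
        rw [Real.le_sqrt (by positivity) (by positivity)]
        have h3 := mul_le_mul_of_nonneg_left hc (by positivity : (0:ℝ) ≤ (a / P') * (y + dy))
        have hid : (a / P') * (y + dy) * (P' * (x + dx)) = a * (x + dx) * (y + dy) := by
          field_simp
        nlinarith
      linarith
  -- the key step: for every p > 0, tzp p x y + s ≤ tz (x+dx) (y+dy)
  have key : ∀ p : ℝ, 0 < p → tzp u a z p x y + s ≤ tz u a z (x + dx) (y + dy) := by
    intro p hp
    obtain ⟨m, hm⟩ : ∃ m : ℝ, m = tzp u a z p x y - z := ⟨_, rfl⟩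
    have hm0 : 0 ≤ m := by have := hz_le_tzp p hp; rw [hm]; linarith
    obtain ⟨L1, hL1⟩ : ∃ L1 : ℝ, L1 = m / p + dx := ⟨_, rfl⟩
    obtain ⟨L2, hL2⟩ : ∃ L2 : ℝ, L2 = m * p / a + dy := ⟨_, rfl⟩
    have hL1p : 0 < L1 := by rw [hL1]; positivity
    have hL2p : 0 < L2 := by rw [hL2]; positivity
    obtain ⟨m', hm'⟩ : ∃ m' : ℝ, m' = Real.sqrt (a * L1 * L2) := ⟨_, rfl⟩
    have hm'sq : m' ^ 2 = a * L1 * L2 := by rw [hm']; exact Real.sq_sqrt (by positivity)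
    have hm'pos : 0 < m' := by rw [hm']; exact Real.sqrt_pos.mpr (by positivity)
    obtain ⟨P, hP⟩ : ∃ P : ℝ, P = m' / L1 := ⟨_, rfl⟩
    have hPpos : 0 < P := by rw [hP]; exact div_pos hm'pos hL1p
    have haP : a / P = m' / L2 := by
      rw [hP, div_div_eq_mul_div, div_eq_div_iff hm'pos.ne' hL2p.ne']
      linear_combination -hm'sq
    -- m + s ≤ m'
    have hms : m + s ≤ m' := by
      have e : Real.sqrt (p * dx) * Real.sqrt ((a / p) * dy) = s := by
        rw [hs, ← Real.sqrt_mul (by positivity)]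
        congr 1
        field_simp
      have h2 : 2 * s ≤ p * dx + (a / p) * dy := by
        nlinarith [sq_nonneg (Real.sqrt (p * dx) - Real.sqrt ((a / p) * dy)),
          Real.sq_sqrt (by positivity : (0:ℝ) ≤ p * dx),
          Real.sq_sqrt (by positivity : (0:ℝ) ≤ (a / p) * dy), e]
      have expand : a * L1 * L2 = m ^ 2 + m * ((a / p) * dy + p * dx) + a * (dx * dy) := by
        rw [hL1, hL2]; field_simp; ring
      rw [hm', Real.le_sqrt (by positivity) (by positivity)]
      nlinarith [mul_le_mul_of_nonneg_left h2 hm0]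
    -- per-element bound at the new point
    have hkey : ∀ q : ℝ × ℝ, 0 ≤ q.1 → q.1 ≤ x + dx → 0 ≤ q.2 → q.2 ≤ y + dy → u q ≤ z →
        m' ≤ P * (x + dx - q.1) + (a / P) * (y + dy - q.2) := by
      intro q h1 h2 h3 h4 h5
      obtain ⟨A, hA⟩ : ∃ A : ℝ, A = x + dx - q.1 := ⟨_, rfl⟩
      obtain ⟨B, hB⟩ : ∃ B : ℝ, B = y + dy - q.2 := ⟨_, rfl⟩
      rw [← hA, ← hB]
      have hA0 : 0 ≤ A := by rw [hA]; linarith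
      have hB0 : 0 ≤ B := by rw [hB]; linarith
      have main : L1 * L2 ≤ A * L2 + B * L1 := by
        rcases le_or_gt q.1 x with hq1 | hq1
        · rcases le_or_gt q.2 y with hq2 | hq2
          · -- interior case
            have hmle : m ≤ p * (x - q.1) + (a / p) * (y - q.2) := by
              have h6 := htzp_le x y p hp q h1 hq1 h3 hq2 h5
              rw [hm]; linarith
            have hα : 0 ≤ x - q.1 := by linarith
            have hβ : 0 ≤ y - q.2 := by linarith
            have expand : a * ((A * L2 + B * L1) - L1 * L2)
                = m * (p * (x - q.1) + (a / p) * (y - q.2) - m)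
                  + a * ((x - q.1) * dy + (y - q.2) * dx + dx * dy) := by
              rw [hA, hB, hL1, hL2]; field_simp; ring
            nlinarith [mul_nonneg hm0
                (by linarith : (0:ℝ) ≤ p * (x - q.1) + (a / p) * (y - q.2) - m),
              mul_nonneg hα hdy.le, mul_nonneg hβ hdx.le]
          · -- q.2 > y : compare with the admissible point (q.1, y)
            have huq : u (q.1, y) ≤ z := le_trans (hmono (q.1, y) q h1 hy le_rfl hq2.le) h5
            have hmle : m ≤ p * (x - q.1) := by
              have h6 := htzp_le x y p hp (q.1, y) h1 hq1 hy le_rfl huq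
              simp only [sub_self, mul_zero, add_zero] at h6
              rw [hm]; linarith
            have hAL : L1 ≤ A := by
              have h7 : m / p ≤ x - q.1 := (div_le_iff₀ hp).mpr
                (by nlinarith)
              rw [hL1, hA]; linarith
            nlinarith [mul_nonneg hB0 hL1p.le, mul_le_mul_of_nonneg_right hAL hL2p.le]
        · -- q.1 > x : then q.2 < y; compare with (x, q.2)
          have hq2 : q.2 < y := by
            by_contra hcon
            push_neg at hcon
            have := hmono (x, y) q hx hy hq1.le hcon
            linarith
          have huq : u (x, q.2) ≤ z := le_trans (hmono (x, q.2) q hx h3 hq1.le le_rfl) h5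
          have hmle : m ≤ (a / p) * (y - q.2) := by
            have h6 := htzp_le x y p hp (x, q.2) hx le_rfl h3 hq2.le huq
            simp only [sub_self, mul_zero, add_zero] at h6
            rw [hm]; linarith
          have hBL : L2 ≤ B := by
            have hap : 0 < a / p := div_pos ha hp
            have h7 : m * p / a ≤ y - q.2 := by
              rw [div_le_iff₀ ha]
              have h8 := mul_le_mul_of_nonneg_right hmle hp.le
              have h9 : (a / p) * (y - q.2) * p = (y - q.2) * a := by field_simp
              linarith [h9 ▸ h8]
            rw [hL2, hB]; linarith
          nlinarith [mul_nonneg hA0 hL2p.le, mul_le_mul_of_nonneg_right hBL hL1p.le]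
      -- conclude from main
      have hc1 : P * A = m' / (L1 * L2) * (A * L2) := by
        rw [hP]; field_simp
      have hc2 : (a / P) * B = m' / (L1 * L2) * (B * L1) := by
        rw [haP]; field_simp
      have hc3 : m' = m' / (L1 * L2) * (L1 * L2) := by
        rw [div_mul_cancel₀]
        positivity
      calc m' = m' / (L1 * L2) * (L1 * L2) := hc3
        _ ≤ m' / (L1 * L2) * (A * L2 + B * L1) :=
            mul_le_mul_of_nonneg_left main (by positivity)
        _ = P * A + (a / P) * B := by rw [hc1, hc2, mul_add]
    -- tzp at the new point with slope P is at least z + m'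
    have hnew : z + m' ≤ tzp u a z P (x + dx) (y + dy) := by
      apply le_csInf
      · exact ⟨_, ⟨(0, y + dy), ⟨le_refl 0, hXpos.le, hYpos.le, le_refl _, hzero1 _ hYpos.le⟩, rfl⟩⟩
      · rintro _ ⟨q, ⟨h1, h2, h3, h4, h5⟩, rfl⟩
        have := hkey q h1 h2 h3 h4 h5
        simp only
        linarith
    have hsup : tzp u a z P (x + dx) (y + dy) ≤ tz u a z (x + dx) (y + dy) :=
      le_csSup hbddAbove ⟨P, hPpos, rfl⟩
    have hmz : tzp u a z p x y = z + m := by rw [hm]; ring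
    linarith
  -- assemble
  have hold : tz u a z x y ≤ tz u a z (x + dx) (y + dy) - s := by
    apply csSup_le
    · exact ⟨_, ⟨1, by norm_num, rfl⟩⟩
    · rintro _ ⟨p, hp, rfl⟩
      simp only [mem_Ioi] at hp
      have := key p hp
      simp only
      linarith
  linarith
end

section
/- Let u : ℝ≥0² → ℝ≥0 be doubly increasing with u(0,t) = u(t,0) = 0 for all t ≥ 0. Then for any C > 0 there exists a continuous doubly increasing function ũ on ℝ≥0² such that 0 ≤ ũ ≤ u everywhere and (∂ũ/∂x)(∂ũ/∂y) ≥ C at every point where ũ ≠ u and ũ is differentiable. -/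
/-!
Perron's method. Let `ũ` be the supremum of all monotone functions `0 ≤ w ≤ u` that share the
modulus of continuity of `c √(xy)`, with `c = 2 √C`; it belongs to this class, so it is
continuous. If `ũ p < u p`, raising `ũ` above `p` by `c √((x - p₁)(y - p₂))`, capped at `u p`,
stays in the class, so `ũ` grows at least like `c s t` along `p + t (1, s²)`. Hence
`∂ₓũ + s² ∂ᵧũ ≥ c s` for every `s > 0`, which forces `∂ₓũ ∂ᵧũ ≥ c² / 4 = C`.
-/

open Set Filter Topology

namespace DoublyIncreasing

lemma sqrt_add_le_add_sqrt {a b : ℝ} (ha : 0 ≤ a) (hb : 0 ≤ b) : √(a + b) ≤ √a + √b := by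
  rw [Real.sqrt_le_iff]
  refine ⟨by positivity, ?_⟩
  nlinarith [Real.sq_sqrt ha, Real.sq_sqrt hb, Real.sqrt_nonneg a, Real.sqrt_nonneg b]

lemma sqrt_mul_add_sqrt_mul_le {a b d e : ℝ} (ha : 0 ≤ a) (hb : 0 ≤ b) (hd : 0 ≤ d)
    (he : 0 ≤ e) : √(a * b) + √(d * e) ≤ √((a + d) * (b + e)) := by
  rw [Real.le_sqrt (by positivity) (by positivity), Real.sqrt_mul ha, Real.sqrt_mul hd]
  nlinarith [Real.sq_sqrt ha, Real.sq_sqrt hb, Real.sq_sqrt hd, Real.sq_sqrt he,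
    sq_nonneg (√a * √e - √d * √b)]

lemma sq_div_four_le_mul {c α β : ℝ} (hc : 0 < c) (h : ∀ s > 0, c * s ≤ α + s ^ 2 * β) :
    c ^ 2 / 4 ≤ α * β := by
  have hβ : 0 < β := by
    by_contra! hβ
    have := h ((|α| + 1) / c) (by positivity)
    rw [mul_div_cancel₀ _ hc.ne'] at this
    nlinarith [le_abs_self α, sq_nonneg ((|α| + 1) / c)]
  have := h (c / (2 * β)) (by positivity)
  field_simp at this
  nlinarith

lemma HasLineDerivAt.le_of_eventually_add_le {E : Type*} [AddCommGroup E] [Module ℝ E]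
    {f : E → ℝ} {f' k : ℝ} {x v : E} (hf : HasLineDerivAt ℝ f f' x v)
    (h : ∀ᶠ t in 𝓝[>] (0 : ℝ), f x + t * k ≤ f (x + t • v)) : k ≤ f' :=
  ge_of_tendsto hf.tendsto_slope_zero_right <| by
    filter_upwards [h, self_mem_nhdsWithin] with t ht (htpos : 0 < t)
    rw [smul_eq_mul, le_inv_mul_iff₀ htpos]
    linarith

/-- The modulus of `(x, y) ↦ c √(xy)` in its first variable. -/
def HasFstModulus (c : ℝ) (w : ℝ × ℝ → ℝ) : Prop :=
  ∀ q : ℝ × ℝ, 0 ≤ q → ∀ x, 0 ≤ x → x ≤ q.1 → w q ≤ w (x, q.2) + c * √((q.1 - x) * q.2)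

section Continuity

variable {c : ℝ} {w : ℝ × ℝ → ℝ}

lemma sub_le_of_hasFstModulus (hc : 0 ≤ c) (h₁ : HasFstModulus c w)
    (h₂ : HasFstModulus c (w ∘ Prod.swap)) {a b : ℝ × ℝ} (ha : 0 ≤ a) (hab : a ≤ b) :
    w b - w a ≤ c * (√((b.1 - a.1) * b.2) + √((b.2 - a.2) * b.1)) := by
  have hb : 0 ≤ b := ha.trans hab
  have step₁ := h₁ b hb a.1 ha.1 hab.1
  have step₂ := h₂ (b.2, a.1) ⟨hb.2, ha.1⟩ a.2 ha.2 hab.2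
  simp only [Function.comp_apply, Prod.swap_prod_mk] at step₂
  have : √((b.2 - a.2) * a.1) ≤ √((b.2 - a.2) * b.1) := by
    gcongr
    · linarith [hab.2]
    · exact hab.1
  nlinarith [mul_le_mul_of_nonneg_left this hc]

lemma MonotoneOn.continuousOn_of_hasFstModulus (hw : MonotoneOn w (Ici 0)) (hc : 0 ≤ c)
    (h₁ : HasFstModulus c w) (h₂ : HasFstModulus c (w ∘ Prod.swap)) :
    ContinuousOn w (Ici 0) := by
  intro a ha
  set g : ℝ × ℝ → ℝ :=
    fun b => c * (√(|a.1 - b.1| * max a.2 b.2) + √(|a.2 - b.2| * max a.1 b.1))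
  have hg : Tendsto g (𝓝[Ici 0] a) (𝓝 0) := by
    have hga : g a = 0 := by simp [g]
    rw [← hga]
    exact (by fun_prop : Continuous g).continuousWithinAt
  have hbound : ∀ b ∈ Ici 0, ‖w b - w a‖ ≤ g b := by
    intro b hb
    have hinf : 0 ≤ a ⊓ b := le_inf ha hb
    have := sub_le_of_hasFstModulus hc h₁ h₂ hinf inf_le_sup
    simp only [Prod.fst_sup, Prod.snd_sup, Prod.fst_inf, Prod.snd_inf, max_sub_min_eq_abs'] at this
    have := hw hinf ha inf_le_left
    have := hw hinf hb inf_le_right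
    have := hw ha (hinf.trans inf_le_sup) le_sup_left
    have := hw hb (hinf.trans inf_le_sup) le_sup_right
    rw [Real.norm_eq_abs, abs_le]
    constructor <;> linarith
  rw [ContinuousWithinAt, tendsto_iff_norm_sub_tendsto_zero]
  exact squeeze_zero' (Eventually.of_forall fun _ => norm_nonneg _)
    (eventually_nhdsWithin_of_forall hbound) hg

end Continuity

structure Admissible (u : ℝ × ℝ → ℝ) (c : ℝ) (w : ℝ × ℝ → ℝ) : Prop where
  monotoneOn : MonotoneOn w (Ici 0)
  nonneg : ∀ p, 0 ≤ p → 0 ≤ w p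
  le : ∀ p, 0 ≤ p → w p ≤ u p
  fst_modulus : HasFstModulus c w
  snd_modulus : HasFstModulus c (w ∘ Prod.swap)

noncomputable def envelope (u : ℝ × ℝ → ℝ) (c : ℝ) (p : ℝ × ℝ) : ℝ :=
  sSup ((fun w => w p) '' {w | Admissible u c w})

noncomputable def bump (v : ℝ × ℝ → ℝ) (c K : ℝ) (p z : ℝ × ℝ) : ℝ :=
  if p ≤ z then max (v z) (min (v p + c * √((z.1 - p.1) * (z.2 - p.2))) K) else v z

section Bump

variable {v : ℝ × ℝ → ℝ} {c K : ℝ} {p : ℝ × ℝ}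

lemma le_bump (z : ℝ × ℝ) : v z ≤ bump v c K p z := by
  unfold bump
  split_ifs
  exacts [le_max_left _ _, le_rfl]

lemma add_le_bump {z : ℝ × ℝ} (hpz : p ≤ z) (h : v p + c * √((z.1 - p.1) * (z.2 - p.2)) ≤ K) :
    v p + c * √((z.1 - p.1) * (z.2 - p.2)) ≤ bump v c K p z := by
  rw [bump, if_pos hpz, min_eq_left h]
  exact le_max_right _ _

lemma bump_comp_swap : bump v c K p ∘ Prod.swap = bump (v ∘ Prod.swap) c K p.swap := by
  funext z
  simp [bump, ← Prod.swap_le_swap (x := p), mul_comm]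

lemma monotoneOn_bump (hv : MonotoneOn v (Ici 0)) (hc : 0 ≤ c) :
    MonotoneOn (bump v c K p) (Ici 0) := by
  intro z hz z' hz' hzz'
  by_cases hpz : p ≤ z
  · rw [bump, bump, if_pos hpz, if_pos (hpz.trans hzz')]
    have h₁ : 0 ≤ z.1 - p.1 := sub_nonneg.mpr hpz.1
    have h₂ : 0 ≤ z.2 - p.2 := sub_nonneg.mpr hpz.2
    gcongr
    all_goals first | exact hv hz hz' hzz' | linarith [hzz'.1, hzz'.2]
  · rw [bump, if_neg hpz]
    exact (hv hz hz' hzz').trans (le_bump z')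

lemma hasFstModulus_bump (hc : 0 ≤ c) (hv : MonotoneOn v (Ici 0)) (hv₁ : HasFstModulus c v)
    (hp : 0 ≤ p) : HasFstModulus c (bump v c K p) := by
  intro q hq x hx hxq
  have hp₂ : 0 ≤ p.2 := hp.2
  have hq₂ : 0 ≤ q.2 := hq.2
  have hvq := hv₁ q hq x hx hxq
  have hbump := le_bump (v := v) (c := c) (K := K) (p := p) (x, q.2)
  by_cases hpq : p ≤ q
  swap
  · rw [bump, if_neg hpq]
    linarith
  rw [bump, if_pos hpq]
  refine max_le (by linarith) ?_
  by_cases hpx : p.1 ≤ x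
  · have hpz : p ≤ (x, q.2) := ⟨hpx, hpq.2⟩
    have hS : √((q.1 - p.1) * (q.2 - p.2)) ≤
        √((x - p.1) * (q.2 - p.2)) + √((q.1 - x) * q.2) := calc
      _ = √((x - p.1) * (q.2 - p.2) + (q.1 - x) * (q.2 - p.2)) := by ring_nf
      _ ≤ √((x - p.1) * (q.2 - p.2)) + √((q.1 - x) * (q.2 - p.2)) := by
        apply sqrt_add_le_add_sqrt <;> apply mul_nonneg <;> linarith [hpq.2]
      _ ≤ _ := by gcongr; linarith
    rw [bump, if_pos hpz]
    calc min (v p + c * √((q.1 - p.1) * (q.2 - p.2))) K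
        ≤ min (v p + c * √((x - p.1) * (q.2 - p.2)) + c * √((q.1 - x) * q.2))
            (K + c * √((q.1 - x) * q.2)) := by
          have : 0 ≤ c * √((q.1 - x) * q.2) := by positivity
          exact min_le_min (by nlinarith [mul_le_mul_of_nonneg_left hS hc]) (by linarith)
      _ = min (v p + c * √((x - p.1) * (q.2 - p.2))) K + c * √((q.1 - x) * q.2) :=
          min_add_add_right _ _ _
      _ ≤ _ := add_le_add_left (le_max_right _ _) _
  · push Not at hpx
    have hvp := hv₁ p hp x hx hpx.le
    have hmono : v (x, p.2) ≤ v (x, q.2) :=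
      hv (show (x, p.2) ∈ Ici 0 from ⟨hx, hp₂⟩) (show (x, q.2) ∈ Ici 0 from ⟨hx, hq₂⟩)
        ⟨le_rfl, hpq.2⟩
    have hCS : √((p.1 - x) * p.2) + √((q.1 - p.1) * (q.2 - p.2)) ≤ √((q.1 - x) * q.2) := by
      convert sqrt_mul_add_sqrt_mul_le (sub_nonneg.mpr hpx.le) hp.2 (sub_nonneg.mpr hpq.1)
        (sub_nonneg.mpr hpq.2) using 2
      ring
    have := min_le_left (v p + c * √((q.1 - p.1) * (q.2 - p.2))) K
    nlinarith [mul_le_mul_of_nonneg_left hCS hc]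

end Bump

section Envelope

variable {u : ℝ × ℝ → ℝ} {c : ℝ}

lemma admissible_zero (hu : ∀ p, 0 ≤ p → 0 ≤ u p) (hc : 0 ≤ c) : Admissible u c 0 where
  monotoneOn := monotoneOn_const
  nonneg _ _ := le_rfl
  le := hu
  fst_modulus _ _ _ _ _ := by simp only [Pi.zero_apply, zero_add]; positivity
  snd_modulus _ _ _ _ _ := by simp only [Pi.zero_comp, Pi.zero_apply, zero_add]; positivity

lemma Admissible.comp_swap_monotoneOn {w : ℝ × ℝ → ℝ} (hw : Admissible u c w) :
    MonotoneOn (w ∘ Prod.swap) (Ici 0) := fun _ ha _ hb hab =>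
  hw.monotoneOn (Prod.swap_le_swap.mpr ha) (Prod.swap_le_swap.mpr hb) (Prod.swap_le_swap.mpr hab)

lemma admissible_bump (hu : MonotoneOn u (Ici 0)) (hc : 0 ≤ c) {w : ℝ × ℝ → ℝ}
    (hw : Admissible u c w) {p : ℝ × ℝ} (hp : 0 ≤ p) : Admissible u c (bump w c (u p) p) where
  monotoneOn := monotoneOn_bump hw.monotoneOn hc
  nonneg z hz := (hw.nonneg z hz).trans (le_bump z)
  le z hz := by
    unfold bump
    split_ifs with hpz
    · exact max_le (hw.le z hz) ((min_le_right _ _).trans (hu hp hz hpz))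
    · exact hw.le z hz
  fst_modulus := hasFstModulus_bump hc hw.monotoneOn hw.fst_modulus hp
  snd_modulus := by
    rw [bump_comp_swap]
    exact hasFstModulus_bump hc hw.comp_swap_monotoneOn hw.snd_modulus
      (Prod.swap_le_swap.mpr hp)

lemma Admissible.le_envelope {w : ℝ × ℝ → ℝ} (hw : Admissible u c w) {p : ℝ × ℝ} (hp : 0 ≤ p) :
    w p ≤ envelope u c p :=
  le_csSup ⟨u p, by rintro _ ⟨w', hw', rfl⟩; exact hw'.le p hp⟩ ⟨w, hw, rfl⟩

lemma envelope_le (hu : ∀ p, 0 ≤ p → 0 ≤ u p) (hc : 0 ≤ c) {p : ℝ × ℝ} {b : ℝ}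
    (h : ∀ w, Admissible u c w → w p ≤ b) : envelope u c p ≤ b :=
  csSup_le ⟨0, 0, admissible_zero hu hc, rfl⟩ (by rintro _ ⟨w, hw, rfl⟩; exact h w hw)

lemma admissible_envelope (hu : ∀ p, 0 ≤ p → 0 ≤ u p) (hc : 0 ≤ c) :
    Admissible u c (envelope u c) where
  monotoneOn _ hp _ hq hpq := envelope_le hu hc fun _ hw =>
    (hw.monotoneOn hp hq hpq).trans (hw.le_envelope hq)
  nonneg _ hp := (admissible_zero hu hc).le_envelope hp
  le p hp := envelope_le hu hc fun _ hw => hw.le p hp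
  fst_modulus q hq x hx hxq := envelope_le hu hc fun _ hw => by
    linarith [hw.fst_modulus q hq x hx hxq, hw.le_envelope (p := (x, q.2)) ⟨hx, hq.2⟩]
  snd_modulus q hq x hx hxq := envelope_le hu hc fun _ hw => by
    have := hw.snd_modulus q hq x hx hxq
    simp only [Function.comp_apply, Prod.swap_prod_mk] at this ⊢
    linarith [hw.le_envelope (p := (q.2, x)) ⟨hq.2, hx⟩]

lemma add_le_envelope (hu : MonotoneOn u (Ici 0)) (hu₀ : ∀ p, 0 ≤ p → 0 ≤ u p) (hc : 0 ≤ c)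
    {p z : ℝ × ℝ} (hp : 0 ≤ p) (hpz : p ≤ z)
    (h : envelope u c p + c * √((z.1 - p.1) * (z.2 - p.2)) ≤ u p) :
    envelope u c p + c * √((z.1 - p.1) * (z.2 - p.2)) ≤ envelope u c z :=
  (add_le_bump hpz h).trans
    ((admissible_bump hu hc (admissible_envelope hu₀ hc) hp).le_envelope (hp.trans hpz))

lemma mul_le_fderiv_envelope_apply (hu : MonotoneOn u (Ici 0)) (hu₀ : ∀ p, 0 ≤ p → 0 ≤ u p)
    (hc : 0 ≤ c) {p : ℝ × ℝ} (hp : 0 ≤ p) (hlt : envelope u c p < u p)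
    {L : ℝ × ℝ →L[ℝ] ℝ} (hL : HasFDerivAt (envelope u c) L p) {s : ℝ} (hs : 0 ≤ s) :
    c * s ≤ L (1, s ^ 2) := by
  apply HasLineDerivAt.le_of_eventually_add_le (hL.hasLineDerivAt (1, s ^ 2))
  have hsmall : ∀ᶠ t in 𝓝[>] (0 : ℝ), c * s * t < u p - envelope u c p :=
    nhdsWithin_le_nhds <| (Continuous.tendsto' (by fun_prop) 0 0 (by simp)).eventually
      (gt_mem_nhds (sub_pos.mpr hlt))
  filter_upwards [hsmall, self_mem_nhdsWithin] with t ht (htpos : 0 < t)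
  have hsqrt : √(((p + t • ((1 : ℝ), s ^ 2)).1 - p.1) * ((p + t • ((1 : ℝ), s ^ 2)).2 - p.2))
      = s * t := by
    simp only [Prod.fst_add, Prod.snd_add, Prod.smul_mk, smul_eq_mul, add_sub_cancel_left]
    rw [show t * 1 * (t * s ^ 2) = (s * t) ^ 2 by ring]
    exact Real.sqrt_sq (by positivity)
  have hpz : p ≤ p + t • ((1 : ℝ), s ^ 2) :=
    le_add_of_nonneg_right (smul_nonneg htpos.le ⟨zero_le_one, sq_nonneg s⟩)
  have := add_le_envelope hu hu₀ hc hp hpz (by rw [hsqrt]; linarith)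
  rw [hsqrt] at this
  linarith

lemma sq_div_four_le_deriv_mul_deriv_envelope (hu : MonotoneOn u (Ici 0))
    (hu₀ : ∀ p, 0 ≤ p → 0 ≤ u p) (hc : 0 < c) {p : ℝ × ℝ} (hp : 0 ≤ p)
    (hlt : envelope u c p < u p) (hd : DifferentiableAt ℝ (envelope u c) p) :
    c ^ 2 / 4 ≤ deriv (fun t => envelope u c (t, p.2)) p.1 *
      deriv (fun t => envelope u c (p.1, t)) p.2 := by
  have hL := hd.hasFDerivAt
  have hx : HasDerivAt (fun t => envelope u c (t, p.2)) (fderiv ℝ (envelope u c) p (1, 0)) p.1 :=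
    (hL.comp_hasDerivAt p.1 ((hasDerivAt_id' p.1).prodMk (hasDerivAt_const p.1 p.2)) :)
  have hy : HasDerivAt (fun t => envelope u c (p.1, t)) (fderiv ℝ (envelope u c) p (0, 1)) p.2 :=
    (hL.comp_hasDerivAt p.2 ((hasDerivAt_const p.2 p.1).prodMk (hasDerivAt_id' p.2)) :)
  rw [hx.deriv, hy.deriv]
  refine sq_div_four_le_mul hc fun s hs => ?_
  have hsplit : ((1 : ℝ), s ^ 2) = (1, 0) + s ^ 2 • (0, 1) := Prod.ext (by simp) (by simp)
  have := mul_le_fderiv_envelope_apply hu hu₀ hc.le hp hlt hL hs.le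
  rwa [hsplit, map_add, map_smul, smul_eq_mul] at this

end Envelope

end DoublyIncreasing

open DoublyIncreasing in
theorem stmt_15_general (u : ℝ × ℝ → ℝ)
    (hmono : ∀ p q : ℝ × ℝ, 0 ≤ p.1 → 0 ≤ p.2 → p.1 ≤ q.1 → p.2 ≤ q.2 → u p ≤ u q)
    (hnonneg : ∀ p : ℝ × ℝ, 0 ≤ p.1 → 0 ≤ p.2 → 0 ≤ u p)
    (C : ℝ) (hC : 0 < C) :
    ∃ v : ℝ × ℝ → ℝ,
      ContinuousOn v {p : ℝ × ℝ | 0 ≤ p.1 ∧ 0 ≤ p.2} ∧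
      (∀ p q : ℝ × ℝ, 0 ≤ p.1 → 0 ≤ p.2 → p.1 ≤ q.1 → p.2 ≤ q.2 → v p ≤ v q) ∧
      (∀ p : ℝ × ℝ, 0 ≤ p.1 → 0 ≤ p.2 → 0 ≤ v p ∧ v p ≤ u p) ∧
      (∀ p : ℝ × ℝ, 0 ≤ p.1 → 0 ≤ p.2 → v p ≠ u p → DifferentiableAt ℝ v p →
        C ≤ deriv (fun t => v (t, p.2)) p.1 * deriv (fun t => v (p.1, t)) p.2) := by
  have hu : MonotoneOn u (Ici 0) := fun p hp _ _ hpq => hmono _ _ hp.1 hp.2 hpq.1 hpq.2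
  have hu₀ : ∀ p : ℝ × ℝ, 0 ≤ p → 0 ≤ u p := fun p hp => hnonneg p hp.1 hp.2
  have hc : 0 < 2 * √C := by positivity
  have hv := admissible_envelope hu₀ hc.le
  refine ⟨envelope u (2 * √C),
    hv.monotoneOn.continuousOn_of_hasFstModulus hc.le hv.fst_modulus hv.snd_modulus,
    fun p q hp₁ hp₂ h₁ h₂ => hv.monotoneOn ⟨hp₁, hp₂⟩ ⟨hp₁.trans h₁, hp₂.trans h₂⟩ ⟨h₁, h₂⟩,
    fun p hp₁ hp₂ => ⟨hv.nonneg p ⟨hp₁, hp₂⟩, hv.le p ⟨hp₁, hp₂⟩⟩,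
    fun p hp₁ hp₂ hne hd => ?_⟩
  have := sq_div_four_le_deriv_mul_deriv_envelope hu hu₀ hc ⟨hp₁, hp₂⟩
    ((hv.le p ⟨hp₁, hp₂⟩).lt_of_ne hne) hd
  rwa [mul_pow, Real.sq_sqrt hC.le, show (2 : ℝ) ^ 2 * C / 4 = C by ring] at this

theorem stmt_15 (u : ℝ × ℝ → ℝ)
    (hmono : ∀ p q : ℝ × ℝ, 0 ≤ p.1 → 0 ≤ p.2 → p.1 ≤ q.1 → p.2 ≤ q.2 → u p ≤ u q)
    (hnonneg : ∀ p : ℝ × ℝ, 0 ≤ p.1 → 0 ≤ p.2 → 0 ≤ u p)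
    (haxes : ∀ t : ℝ, 0 ≤ t → u (0, t) = 0 ∧ u (t, 0) = 0)
    (C : ℝ) (hC : 0 < C) :
    ∃ v : ℝ × ℝ → ℝ,
      ContinuousOn v {p : ℝ × ℝ | 0 ≤ p.1 ∧ 0 ≤ p.2} ∧
      (∀ p q : ℝ × ℝ, 0 ≤ p.1 → 0 ≤ p.2 → p.1 ≤ q.1 → p.2 ≤ q.2 → v p ≤ v q) ∧
      (∀ p : ℝ × ℝ, 0 ≤ p.1 → 0 ≤ p.2 → 0 ≤ v p ∧ v p ≤ u p) ∧
      (∀ p : ℝ × ℝ, 0 ≤ p.1 → 0 ≤ p.2 → v p ≠ u p → DifferentiableAt ℝ v p →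
        C ≤ deriv (fun t => v (t, p.2)) p.1 * deriv (fun t => v (p.1, t)) p.2) :=
  stmt_15_general u hmono hnonneg C hC
end

section
/- Let A ⊆ B ⊆ ℝ² and let u : A → ℝ be a bounded doubly increasing function. Then there exists a doubly increasing function w : B → ℝ such that the restriction of w to A equals u, the closures of the images u(A) and w(B) coincide, and w(x,y) = inf_A u at every point (x,y) ∈ B such that every point (x',y') ∈ A has x' > x or y' > y. -/
/-!
Extend `u` by `w p = sup ({inf_A u} ∪ u (A ∩ Iic p))`. Enlarging `p` enlarges the set, so `w` is
monotone; on `A` the supremum is attained at `p` itself by monotonicity of `u`; every value of `w`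
is the supremum of a subset of `closure (u '' A)`, hence lies in it; and where no point of `A` lies
below `p` only the floor `inf_A u` is left.
-/

open Set

section MonotoneExtension

variable {α β : Type*} [Preorder α] [ConditionallyCompleteLinearOrder β]

noncomputable def monotoneExtension (A : Set α) (u : α → β) (p : α) : β :=
  sSup (insert (sInf (u '' A)) (u '' (A ∩ Iic p)))

variable {A : Set α} {u : α → β}

lemma bddAbove_monotoneExtension_set (hbdd : BddAbove (u '' A)) (p : α) :
    BddAbove (insert (sInf (u '' A)) (u '' (A ∩ Iic p))) :=
  (bddAbove_insert.mpr hbdd).mono (insert_subset_insert (image_mono inter_subset_left))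

lemma monotone_monotoneExtension (hbdd : BddAbove (u '' A)) :
    Monotone (monotoneExtension A u) := fun _ _ hpq =>
  csSup_le_csSup (bddAbove_monotoneExtension_set hbdd _) (insert_nonempty _ _)
    (insert_subset_insert (image_mono (inter_subset_inter_right A (Iic_subset_Iic.mpr hpq))))

lemma monotoneExtension_eq_of_mem (hmono : MonotoneOn u A)
    (hbdd : BddBelow (u '' A) ∧ BddAbove (u '' A))
    {p : α} (hp : p ∈ A) : monotoneExtension A u p = u p := by
  refine le_antisymm (csSup_le (insert_nonempty _ _) ?_) ?_
  · rintro _ (rfl | ⟨q, ⟨hq, hqp⟩, rfl⟩)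
    · exact csInf_le hbdd.1 (mem_image_of_mem u hp)
    · exact hmono hq hp hqp
  · exact le_csSup (bddAbove_monotoneExtension_set hbdd.2 p)
      (mem_insert_of_mem _ (mem_image_of_mem u ⟨hp, le_rfl⟩))

lemma monotoneExtension_eq_sInf {p : α} (hA : ∀ q ∈ A, ¬q ≤ p) :
    monotoneExtension A u p = sInf (u '' A) := by
  have hempty : A ∩ Iic p = ∅ := eq_empty_of_forall_notMem fun q ⟨hq, hqp⟩ => hA q hq hqp
  rw [monotoneExtension, hempty, image_empty, insert_empty_eq, csSup_singleton]

lemma monotoneExtension_mem_closure [TopologicalSpace β] [OrderTopology β] (hA : A.Nonempty)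
    (hbdd : BddBelow (u '' A) ∧ BddAbove (u '' A)) (p : α) :
    monotoneExtension A u p ∈ closure (u '' A) := by
  have hsub : insert (sInf (u '' A)) (u '' (A ∩ Iic p)) ⊆ closure (u '' A) :=
    insert_subset_iff.mpr ⟨csInf_mem_closure (hA.image u) hbdd.1,
      (image_mono inter_subset_left).trans subset_closure⟩
  exact closure_minimal hsub isClosed_closure <|
    csSup_mem_closure (insert_nonempty _ _) (bddAbove_monotoneExtension_set hbdd.2 p)

end MonotoneExtension

theorem stmt_16 (A B : Set (ℝ × ℝ)) (hAB : A ⊆ B) (hA : A.Nonempty)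
    (u : ℝ × ℝ → ℝ)
    (hmono : ∀ p ∈ A, ∀ q ∈ A, p ≤ q → u p ≤ u q)
    (hbdd : BddBelow (u '' A) ∧ BddAbove (u '' A)) :
    ∃ w : ℝ × ℝ → ℝ,
      (∀ p ∈ A, w p = u p) ∧
      (∀ p ∈ B, ∀ q ∈ B, p ≤ q → w p ≤ w q) ∧
      closure (u '' A) = closure (w '' B) ∧
      (∀ p ∈ B, (∀ q ∈ A, p.1 < q.1 ∨ p.2 < q.2) → w p = sInf (u '' A)) := by
  have hext : ∀ p ∈ A, monotoneExtension A u p = u p := fun p hp =>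
    monotoneExtension_eq_of_mem (fun p hp q hq => hmono p hp q hq) hbdd hp
  refine ⟨monotoneExtension A u, hext,
    fun p _ q _ hpq => monotone_monotoneExtension hbdd.2 hpq, ?_, ?_⟩
  · refine (closure_mono ?_).antisymm (closure_minimal ?_ isClosed_closure)
    · rw [← image_congr hext]
      exact image_mono hAB
    · rintro _ ⟨p, -, rfl⟩
      exact monotoneExtension_mem_closure hA hbdd p
  · intro p _ hp
    refine monotoneExtension_eq_sInf fun q hq hqp => ?_
    rcases hp q hq with h | h
    exacts [hqp.1.not_gt h, hqp.2.not_gt h]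
end
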